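/- Let F(t, X) ∈ F₂[t, X] be a polynomial in two variables over F₂ that is symmetric, i.e., F(t, X) = F(X, t). Let m ≥ 1 be an integer, and suppose there is exactly one power series σ ∈ F₂[[t]] of the form σ = t + t^{m+1} + O(t^{m+2}) satisfying F(t, σ) = 0 (substituting the power series t and σ for the two variables), and that such a σ exists. Then σ ∘ σ = t, i.e., σ is an element of compositional order 2 in 𝒩(F₂). -/

import Mathlib

open PowerSeries

abbrev F2 := ZMod 2

/-- Composition of power series `σ ∘ τ` (substitution of `τ` into `σ`), valid when
`τ` has zero constant coefficient. -/
noncomputable def ngComp (σ τ : PowerSeries F2) : PowerSeries F2 :=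
  PowerSeries.mk fun k =>
    ∑ n ∈ Finset.range (k + 1), PowerSeries.coeff n σ * PowerSeries.coeff k (τ ^ n)

/-!
The series `σ` has a compositional right inverse `τ`. Substituting `τ` into
`F(σ, t) = F(t, σ) = 0` gives `F(t, τ) = 0`, and comparing coefficients in `σ ∘ τ = t` shows
`τ = t - t^(m+1) + O(t^(m+2))`, which in characteristic `2` has the same shape as `σ`.
Uniqueness forces `τ = σ`, so `σ ∘ σ = t`.
-/

namespace PowerSeries

variable {R : Type*} [CommRing R]

lemma coeff_pow_eq_zero_of_lt {τ : R⟦X⟧} (hτ : constantCoeff τ = 0) {k n : ℕ} (h : k < n) :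
    coeff k (τ ^ n) = 0 :=
  coeff_of_lt_order _ ((Nat.cast_lt.mpr h).trans_le (le_order_pow_of_constantCoeff_eq_zero n hτ))

lemma coeff_self_pow {τ : R⟦X⟧} (hτ : constantCoeff τ = 0) (n : ℕ) :
    coeff n (τ ^ n) = coeff 1 τ ^ n := by
  obtain ⟨u, rfl⟩ := X_dvd_iff.mpr hτ
  simp [mul_pow, coeff_X_pow_mul']

lemma coeff_subst_eq_sum {f τ : R⟦X⟧} (hτ : constantCoeff τ = 0) (k : ℕ) :
    coeff k (f.subst τ) = ∑ n ∈ Finset.range (k + 1), coeff n f * coeff k (τ ^ n) := by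
  rw [coeff_subst' (HasSubst.of_constantCoeff_zero' hτ)]
  refine finsum_eq_sum_of_support_subset _ fun n hn => ?_
  rw [Finset.coe_range, Set.mem_Iio, Nat.lt_succ_iff]
  by_contra hkn
  exact hn (by dsimp only; rw [coeff_pow_eq_zero_of_lt hτ (not_le.mp hkn), smul_zero])

section LowCoeffsVanish

variable {f τ : R⟦X⟧} (hτ : constantCoeff τ = 0) {N : ℕ} (hf : ∀ i < N, coeff i f = 0)
include hτ hf

lemma coeff_subst_eq_zero_of_forall_lt {k : ℕ} (hk : k < N) : coeff k (f.subst τ) = 0 := by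
  rw [coeff_subst_eq_sum hτ]
  exact Finset.sum_eq_zero fun n hn => by
    rw [hf n (by rw [Finset.mem_range] at hn; omega), zero_mul]

lemma coeff_subst_of_forall_lt : coeff N (f.subst τ) = coeff N f * coeff 1 τ ^ N := by
  rw [coeff_subst_eq_sum hτ, Finset.sum_range_succ, coeff_self_pow hτ,
    Finset.sum_eq_zero fun n hn => by rw [hf n (Finset.mem_range.mp hn), zero_mul], zero_add]

end LowCoeffsVanish

/-- `σ = X + c X ^ (m + 1) + O(X ^ (m + 2))`; for `c ≠ 0` this says `σ` has depth `m`
in the Nottingham group. -/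
def HasDepth (σ : R⟦X⟧) (m : ℕ) (c : R) : Prop :=
  (∀ i < m + 1, coeff i (σ - X) = 0) ∧ coeff (m + 1) (σ - X) = c

namespace HasDepth

variable {σ τ : R⟦X⟧} {m : ℕ} {c : R}

lemma constantCoeff_eq_zero (hσ : σ.HasDepth m c) : constantCoeff σ = 0 := by
  simpa using hσ.1 0 (Nat.succ_pos m)

lemma coeff_one (hσ : σ.HasDepth m c) (hm : 1 ≤ m) : coeff 1 σ = 1 := by
  simpa [sub_eq_zero] using hσ.1 1 (by omega)

lemma of_subst_eq_X (hσ : σ.HasDepth m c) (hm : 1 ≤ m) (hτ : constantCoeff τ = 0)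
    (hστ : σ.subst τ = X) : τ.HasDepth m (-c) := by
  have hτX : τ - X = -(σ - X).subst τ := by
    rw [subst_sub (HasSubst.of_constantCoeff_zero' hτ), hστ,
      subst_X (HasSubst.of_constantCoeff_zero' hτ), neg_sub]
  have hlow : ∀ i < m + 1, coeff i (τ - X) = 0 := fun i hi => by
    rw [hτX, map_neg, coeff_subst_eq_zero_of_forall_lt hτ hσ.1 hi, neg_zero]
  have hτ1 : coeff 1 τ = 1 := HasDepth.coeff_one ⟨hlow, rfl⟩ hm
  refine ⟨hlow, ?_⟩
  rw [hτX, map_neg, coeff_subst_of_forall_lt hτ hσ.1, hσ.2, hτ1, one_pow, mul_one]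

end HasDepth

lemma subst_aeval {ι : Type*} {τ : R⟦X⟧} (hτ : HasSubst τ) (g : ι → R⟦X⟧)
    (F : MvPolynomial ι R) :
    (MvPolynomial.aeval g F).subst τ = MvPolynomial.aeval (fun i => (g i).subst τ) F := by
  rw [← coe_substAlgHom hτ, MvPolynomial.comp_aeval_apply]

end PowerSeries

lemma MvPolynomial.aeval_vecCons_swap {R S : Type*} [CommSemiring R] [CommSemiring S]
    [Algebra R S] {F : MvPolynomial (Fin 2) R} (hF : rename (Equiv.swap (0 : Fin 2) 1) F = F)
    (a b : S) :
    aeval ![a, b] F = aeval ![b, a] F := by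
  conv_lhs => rw [← hF, aeval_rename]
  congr 2
  funext i
  fin_cases i <;> rfl

lemma ngComp_eq_subst (σ : F2⟦X⟧) {τ : F2⟦X⟧} (hτ : constantCoeff τ = 0) :
    ngComp σ τ = σ.subst τ := by
  ext k
  rw [ngComp, coeff_mk, coeff_subst_eq_sum hτ]

theorem statement12 (F : MvPolynomial (Fin 2) F2)
    (hsym : MvPolynomial.rename (Equiv.swap (0 : Fin 2) 1) F = F)
    (m : ℕ) (hm : 1 ≤ m)
    (h : ∃! σ : PowerSeries F2,
        ((∀ i < m + 1, PowerSeries.coeff i (σ - PowerSeries.X) = 0) ∧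
          PowerSeries.coeff (m + 1) (σ - PowerSeries.X) = 1) ∧
        MvPolynomial.aeval ![PowerSeries.X, σ] F = 0) :
    ∀ σ : PowerSeries F2,
      ((∀ i < m + 1, PowerSeries.coeff i (σ - PowerSeries.X) = 0) ∧
          PowerSeries.coeff (m + 1) (σ - PowerSeries.X) = 1) →
      MvPolynomial.aeval ![PowerSeries.X, σ] F = 0 →
      ngComp σ σ = PowerSeries.X := by
  intro σ hσ hF
  change σ.HasDepth m 1 at hσ
  have hσ0 := hσ.constantCoeff_eq_zero
  set τ := σ.substInvOfIsUnit (hσ.coeff_one hm ▸ isUnit_one)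
  have hτ0 : constantCoeff τ = 0 := constantCoeff_substInvOfIsUnit _ _
  have hστ : σ.subst τ = X := subst_substInvOfIsUnit_right _ hσ0 _
  have hτ : τ.HasDepth m 1 := by
    simpa [show (-1 : F2) = 1 from rfl] using hσ.of_subst_eq_X hm hτ0 hστ
  have hFτ : MvPolynomial.aeval ![X, τ] F = 0 := by
    have hsub := HasSubst.of_constantCoeff_zero' hτ0
    calc MvPolynomial.aeval ![X, τ] F
          = MvPolynomial.aeval ![σ.subst τ, (X : F2⟦X⟧).subst τ] F := by
          rw [hστ, subst_X hsub]
      _ = (MvPolynomial.aeval ![σ, X] F).subst τ := by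
          rw [subst_aeval hsub]
          congr 2
          funext i
          fin_cases i <;> rfl
      _ = 0 := by
          rw [MvPolynomial.aeval_vecCons_swap hsym, hF, ← coe_substAlgHom (R := F2) hsub,
            map_zero]
  have hτσ : τ = σ := h.unique ⟨hτ, hFτ⟩ ⟨hσ, hF⟩
  rw [ngComp_eq_subst σ hσ0, ← hστ, hτσ]
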